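/- arXiv:1011.3930 — 5 statements merged into one kernel-verified Lean document; each statement's English description precedes it below -/
import Mathlib

section
/- The number of circular binary words of length n ≥ 1 that avoid both the factor 00 and the factor 111 (cyclically) equals the Perrin number P(n), where P(0)=3, P(1)=0, P(2)=2 and P(n)=P(n-2)+P(n-3). -/
def perrin : ℕ → ℕ
  | 0 => 3
  | 1 => 0
  | 2 => 2
  | (n + 3) => perrin (n + 1) + perrin n

/-!
A circular word avoiding `00` and `111` is a closed walk of length `n` in the graph on pairs of
letters in which `(a, b) → (b, c)` is an edge when `abc` avoids both factors. Hence their number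
is the trace of the `n`-th power of the adjacency matrix `T` of this graph. A direct computation
gives `T⁴ = T² + T` (the characteristic polynomial is `X (X³ - X - 1)`), so these traces satisfy
the Perrin recurrence, and they agree with `P(1), P(2), P(3)`.
-/

open Finset Matrix

namespace Matrix

variable {S R : Type*} [Fintype S] [DecidableEq S] [CommSemiring R]

theorem sum_paths_prod_mul (M : Matrix S S R) (m : ℕ) (h : S → S → R) :
    ∑ s : Fin (m + 1) → S,
        (∏ i : Fin m, M (s i.castSucc) (s i.succ)) * h (s 0) (s (Fin.last m)) =
      ∑ a, ∑ b, (M ^ m) a b * h a b := by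
  induction m generalizing h with
  | zero =>
    rw [← (Equiv.funUnique (Fin 1) S).symm.sum_comp]
    simp [one_apply]
  | succ m ih =>
    rw [← (Fin.consEquiv fun _ => S).sum_comp, Fintype.sum_prod_type]
    simp only [Fin.consEquiv_apply, Fin.prod_univ_succ, Fin.cons_zero, Fin.castSucc_zero,
      Fin.cons_succ, ← Fin.succ_castSucc, ← Fin.succ_last]
    refine Finset.sum_congr rfl fun a _ => ?_
    calc ∑ t : Fin (m + 1) → S,
          M a (t 0) * (∏ i : Fin m, M (t i.castSucc) (t i.succ)) * h a (t (Fin.last m))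
        = ∑ t : Fin (m + 1) → S,
          (∏ i : Fin m, M (t i.castSucc) (t i.succ)) * (M a (t 0) * h a (t (Fin.last m))) :=
          Finset.sum_congr rfl fun _ _ => by ring
      _ = ∑ b, ∑ c, (M ^ m) b c * (M a b * h a c) := ih fun b c => M a b * h a c
      _ = ∑ c, (M ^ (m + 1)) a c * h a c := by
          simp only [pow_succ', mul_apply, Finset.sum_mul, mul_left_comm _ (M a _), mul_assoc]
          exact Finset.sum_comm

theorem trace_pow_eq_sum_prod (M : Matrix S S R) (n : ℕ) [NeZero n] :
    trace (M ^ n) = ∑ s : ZMod n → S, ∏ i : ZMod n, M (s i) (s (i + 1)) := by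
  obtain ⟨m, rfl⟩ := Nat.exists_eq_succ_of_ne_zero (NeZero.ne n)
  change _ = ∑ s : Fin (m + 1) → S, ∏ i : Fin (m + 1), M (s i) (s (i + 1))
  simp only [Fin.prod_univ_castSucc, Fin.coeSucc_eq_succ, Fin.last_add_one]
  rw [sum_paths_prod_mul M m fun a b => M b a, trace, pow_succ]
  simp only [diag, mul_apply]

theorem card_cyclic_walks_eq_trace_pow (r : S → S → Prop) [DecidableRel r] (n : ℕ) [NeZero n] :
    Nat.card {s : ZMod n → S // ∀ i, r (s i) (s (i + 1))} =
      trace ((of fun a b => if r a b then 1 else 0 : Matrix S S ℕ) ^ n) := by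
  rw [trace_pow_eq_sum_prod, Nat.card_eq_fintype_card, Fintype.card_subtype]
  simp only [of_apply, Fintype.prod_boole, Finset.sum_boole, Nat.cast_id]

theorem trace_pow_eq_perrin {M : Matrix S S ℕ} (hM : M ^ 4 = M ^ 2 + M) (h1 : trace M = 0)
    (h2 : trace (M ^ 2) = 2) (h3 : trace (M ^ 3) = 3) (n : ℕ) (hn : 1 ≤ n) :
    trace (M ^ n) = perrin n := by
  have key : ∀ k, trace (M ^ (k + 1)) = perrin (k + 1) ∧ trace (M ^ (k + 2)) = perrin (k + 2) ∧
      trace (M ^ (k + 3)) = perrin (k + 3) := by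
    intro k
    induction k with
    | zero => exact ⟨by rw [zero_add, pow_one, h1]; rfl, h2, h3⟩
    | succ k ih =>
      refine ⟨ih.2.1, ih.2.2, ?_⟩
      calc trace (M ^ (k + 4)) = trace (M ^ (k + 2)) + trace (M ^ (k + 1)) := by
            rw [pow_add, hM, mul_add, ← pow_add, ← pow_succ, trace_add, add_comm]
        _ = perrin (k + 4) := by rw [ih.1, ih.2.1]; rfl
  obtain ⟨k, rfl⟩ := Nat.exists_eq_add_of_le' hn
  exact (key k).1

end Matrix

namespace ZMod

def windowPairsEquiv {α : Type*} (n : ℕ) (P : α → α → α → Prop) :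
    {w : ZMod n → α // ∀ i, P (w i) (w (i + 1)) (w (i + 2))} ≃
      {s : ZMod n → α × α // ∀ i, (s i).2 = (s (i + 1)).1 ∧ P (s i).1 (s i).2 (s (i + 1)).2} where
  toFun w := ⟨fun i => (w.1 i, w.1 (i + 1)), fun i => by
    simpa [add_assoc, one_add_one_eq_two] using w.2 i⟩
  invFun s := ⟨fun i => (s.1 i).1, fun i => by
    simpa [(s.2 i).1, (s.2 (i + 1)).1, add_assoc, one_add_one_eq_two] using (s.2 i).2⟩
  left_inv _ := rfl
  right_inv s := Subtype.ext <| funext fun i => Prod.ext rfl (s.2 i).1.symm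

end ZMod

abbrev Avoids00And111 (a b c : Bool) : Prop :=
  ¬(a = false ∧ b = false) ∧ ¬(a = true ∧ b = true ∧ c = true)

abbrev AvoidingStep (p q : Bool × Bool) : Prop :=
  p.2 = q.1 ∧ Avoids00And111 p.1 p.2 q.2

def avoidingTransfer : Matrix (Bool × Bool) (Bool × Bool) ℕ :=
  of fun p q => if AvoidingStep p q then 1 else 0

theorem avoidingTransfer_pow_four :
    avoidingTransfer ^ 4 = avoidingTransfer ^ 2 + avoidingTransfer := by
  decide

theorem trace_avoidingTransfer_pow (n : ℕ) (hn : 1 ≤ n) :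
    trace (avoidingTransfer ^ n) = perrin n :=
  trace_pow_eq_perrin avoidingTransfer_pow_four (by decide) (by decide) (by decide) n hn

theorem circular_words_avoiding_00_111 (n : ℕ) (hn : 1 ≤ n) :
    Nat.card {w : ZMod n → Bool //
        (∀ i : ZMod n, ¬ (w i = false ∧ w (i + 1) = false)) ∧
        (∀ i : ZMod n, ¬ (w i = true ∧ w (i + 1) = true ∧ w (i + 2) = true))}
      = perrin n := by
  have : NeZero n := ⟨by omega⟩
  calc _ = Nat.card {w : ZMod n → Bool // ∀ i, Avoids00And111 (w i) (w (i + 1)) (w (i + 2))} :=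
        Nat.card_congr (Equiv.subtypeEquivRight fun _ => forall_and.symm)
    _ = Nat.card {s : ZMod n → Bool × Bool // ∀ i, AvoidingStep (s i) (s (i + 1))} :=
        Nat.card_congr (ZMod.windowPairsEquiv n _)
    _ = trace (avoidingTransfer ^ n) := card_cyclic_walks_eq_trace_pow AvoidingStep n
    _ = perrin n := trace_avoidingTransfer_pow n hn
end

section
/- Let p ≥ 1, d with 1 ≤ d < p, and let Δ = gcd(d,p). The set of circular binary words w of length p (functions ZMod p → {0,1}) that contain no occurrence of a pattern 0u0 with |u| = d-1 (i.e., there is no index i with w(i) = 0 and w(i+d) = 0) has cardinality L(p/Δ)^Δ, where L is the Lucas sequence L(1)=1, L(2)=3, L(n)=L(n-1)+L(n-2). -/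
def lucas : ℕ → ℕ
  | 0 => 2
  | 1 => 1
  | (n + 2) => lucas (n + 1) + lucas n

/-!
Let `m = p / gcd(d, p)` be the additive order of `d` in `ZMod p`. Choosing a representative
of each of the `gcd(d, p)` cosets of `⟨d⟩` identifies `ZMod p` with `(ZMod p ⧸ ⟨d⟩) × ZMod m`
so that adding `d` becomes adding `1` in the second factor; a word avoiding `0u0` is thus a
family of `gcd(d, p)` independent circular words of length `m` without two adjacent zeros.
Those are the closed walks of length `m` for the transfer matrix `A = !![0, 1; 1, 1]`, so
there are `trace (A ^ m)` of them, and `A ^ 2 = A + 1` gives the Lucas recursion.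
-/

open Matrix AddSubgroup Function

namespace Matrix

variable {α R : Type*} [Fintype α] [DecidableEq α] [CommSemiring R]

theorem pow_succ_apply_eq_sum (M : Matrix α α R) (k : ℕ) (a b : α) :
    (M ^ (k + 1)) a b = ∑ v : Fin (k + 1) → α,
      if v 0 = a then (∏ i : Fin k, M (v i.castSucc) (v i.succ)) * M (v (Fin.last k)) b
      else 0 := by
  induction k generalizing a with
  | zero =>
    rw [pow_one, ← (Equiv.funUnique (Fin 1) α).symm.sum_comp]
    simp
  | succ k ih =>
    rw [pow_succ', mul_apply, ← (Fin.consEquiv fun _ => α).sum_comp, Fintype.sum_prod_type]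
    simp_rw [ih, Finset.mul_sum, mul_ite, mul_zero]
    rw [Finset.sum_comm]
    simp [Fin.prod_univ_succ, mul_assoc]

theorem trace_pow_succ_eq_sum (M : Matrix α α R) (k : ℕ) :
    trace (M ^ (k + 1)) = ∑ v : Fin (k + 1) → α, ∏ i, M (v i) (v (i + 1)) := by
  simp only [trace, diag, pow_succ_apply_eq_sum]
  rw [Finset.sum_comm]
  refine Finset.sum_congr rfl fun v _ => ?_
  rw [Finset.sum_ite_eq, if_pos (Finset.mem_univ _), Fin.prod_univ_castSucc]
  simp [Fin.coeSucc_eq_succ]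

def transfer (r : α → α → Prop) [DecidableRel r] : Matrix α α ℕ :=
  of fun a b => if r a b then 1 else 0

theorem card_cyclic_chain_eq_trace (r : α → α → Prop) [DecidableRel r] (n : ℕ) [NeZero n] :
    Nat.card {u : ZMod n → α // ∀ j, r (u j) (u (j + 1))} = trace (transfer r ^ n) := by
  obtain ⟨k, rfl⟩ := Nat.exists_eq_succ_of_ne_zero (NeZero.ne n)
  change Nat.card {u : Fin (k + 1) → α // ∀ j, r (u j) (u (j + 1))} = _
  rw [trace_pow_succ_eq_sum, Nat.card_eq_fintype_card, Fintype.card_subtype]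
  simp [transfer, Finset.prod_boole, Finset.sum_boole]

end Matrix

theorem transfer_noAdjacentFalse_sq :
    transfer (fun a b : Bool => ¬(a = false ∧ b = false)) ^ 2 =
      transfer (fun a b : Bool => ¬(a = false ∧ b = false)) + 1 := by
  ext a b
  cases a <;> cases b <;> simp [sq, mul_apply, transfer]

theorem trace_pow_transfer_noAdjacentFalse :
    ∀ n, trace (transfer (fun a b : Bool => ¬(a = false ∧ b = false)) ^ n) = lucas n
  | 0 => by simp [lucas]
  | 1 => rfl
  | n + 2 => by
    rw [lucas, ← trace_pow_transfer_noAdjacentFalse (n + 1),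
      ← trace_pow_transfer_noAdjacentFalse n, pow_add, transfer_noAdjacentFalse_sq, mul_add,
      mul_one, trace_add, pow_succ]

theorem card_cyclic_noAdjacentFalse (n : ℕ) [NeZero n] :
    Nat.card {u : ZMod n → Bool // ∀ j, ¬(u j = false ∧ u (j + 1) = false)} = lucas n := by
  rw [card_cyclic_chain_eq_trace fun a b => ¬(a = false ∧ b = false),
    trace_pow_transfer_noAdjacentFalse]

section CosetDecomposition

variable {G : Type*} [AddGroup G] (g : G)

noncomputable def zmodMultiplesHom : ZMod (addOrderOf g) →+ G :=
  ZMod.lift _ ⟨zmultiplesHom G g, by simp [addOrderOf_nsmul_eq_zero]⟩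

theorem zmodMultiplesHom_intCast (m : ℤ) : zmodMultiplesHom g m = m • g :=
  ZMod.lift_coe _ _ m

theorem zmodMultiplesHom_one : zmodMultiplesHom g 1 = g := by
  simpa using zmodMultiplesHom_intCast g 1

theorem zmodMultiplesHom_mem_zmultiples (k : ZMod (addOrderOf g)) :
    zmodMultiplesHom g k ∈ zmultiples g := by
  obtain ⟨m, rfl⟩ := ZMod.intCast_surjective k
  rw [zmodMultiplesHom_intCast]
  exact zsmul_mem_zmultiples g m

theorem zmodMultiplesHom_injective : Injective (zmodMultiplesHom g) :=
  (ZMod.lift_injective _).mpr fun m hm =>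
    (ZMod.intCast_zmod_eq_zero_iff_dvd m _).mpr (addOrderOf_dvd_iff_zsmul_eq_zero.mpr hm)

noncomputable def quotientZMultiplesProdEquiv : (G ⧸ zmultiples g) × ZMod (addOrderOf g) ≃ G :=
  Equiv.ofBijective (fun x => x.1.out + zmodMultiplesHom g x.2) <| by
    constructor
    · rintro ⟨q, k⟩ ⟨q', k'⟩ h
      have hq : q = q' := by
        simpa [QuotientAddGroup.mk_add_of_mem _ (zmodMultiplesHom_mem_zmultiples g _)] using
          congrArg (QuotientAddGroup.mk (s := zmultiples g)) h
      subst hq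
      simpa using zmodMultiplesHom_injective g (add_left_cancel h)
    · intro x
      obtain ⟨m, hm⟩ := mem_zmultiples_iff.mp
        (QuotientAddGroup.eq.mp (QuotientAddGroup.out_eq' (x : G ⧸ zmultiples g)))
      exact ⟨(x, m), by simp [zmodMultiplesHom_intCast, hm]⟩

theorem quotientZMultiplesProdEquiv_add_one (q : G ⧸ zmultiples g) (k : ZMod (addOrderOf g)) :
    quotientZMultiplesProdEquiv g (q, k + 1) = quotientZMultiplesProdEquiv g (q, k) + g := by
  change q.out + zmodMultiplesHom g (k + 1) = q.out + zmodMultiplesHom g k + g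
  rw [map_add, zmodMultiplesHom_one, add_assoc]

theorem card_forall_rel_add_eq_pow [Finite (G ⧸ zmultiples g)] {α : Type*}
    (r : α → α → Prop) :
    Nat.card {w : G → α // ∀ i, r (w i) (w (i + g))} =
      Nat.card {u : ZMod (addOrderOf g) → α // ∀ j, r (u j) (u (j + 1))} ^
        (zmultiples g).index := by
  let e := quotientZMultiplesProdEquiv g
  have : {w : G → α // ∀ i, r (w i) (w (i + g))} ≃
      (G ⧸ zmultiples g → {u : ZMod (addOrderOf g) → α // ∀ j, r (u j) (u (j + 1))}) :=
    (((e.arrowCongr (Equiv.refl α)).symm.trans (Equiv.curry _ _ _)).subtypeEquiv fun w => by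
      simp [e.surjective.forall, e, quotientZMultiplesProdEquiv_add_one]).trans
      Equiv.subtypePiEquivPi
  rw [Nat.card_congr this, Nat.card_fun, index]

end CosetDecomposition

namespace ZMod

variable (p d : ℕ) [NeZero p]

theorem addOrderOf_natCast_eq_div_gcd : addOrderOf (d : ZMod p) = p / Nat.gcd d p := by
  rw [addOrderOf_coe d (NeZero.ne p), Nat.gcd_comm]

theorem index_zmultiples_natCast : (zmultiples (d : ZMod p)).index = Nat.gcd d p := by
  refine Nat.eq_of_mul_eq_mul_right (addOrderOf_pos (d : ZMod p)) ?_
  rw [← Nat.card_zmultiples, index_mul_card, Nat.card_zmod, Nat.card_zmultiples,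
    addOrderOf_natCast_eq_div_gcd, Nat.mul_div_cancel' (Nat.gcd_dvd_right d p)]

end ZMod

theorem circular_words_avoiding_0u0_general (p d : ℕ) (hdp : d < p) :
    Nat.card {w : ZMod p → Bool //
        ∀ i : ZMod p, ¬ (w i = false ∧ w (i + (d : ZMod p)) = false)}
      = lucas (p / Nat.gcd d p) ^ Nat.gcd d p := by
  have : NeZero p := ⟨by omega⟩
  have horder := ZMod.addOrderOf_natCast_eq_div_gcd p d
  have : NeZero (p / Nat.gcd d p) := ⟨horder ▸ (addOrderOf_pos (d : ZMod p)).ne'⟩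
  rw [card_forall_rel_add_eq_pow (d : ZMod p) fun a b => ¬(a = false ∧ b = false),
    ZMod.index_zmultiples_natCast, horder, card_cyclic_noAdjacentFalse]

theorem circular_words_avoiding_0u0 (p d : ℕ) (hd : 1 ≤ d) (hdp : d < p) :
    Nat.card {w : ZMod p → Bool //
        ∀ i : ZMod p, ¬ (w i = false ∧ w (i + (d : ZMod p)) = false)}
      = lucas (p / Nat.gcd d p) ^ Nat.gcd d p :=
  circular_words_avoiding_0u0_general p d hdp
end

section
/- Let p ≥ 2 be even, φ = (1+√5)/2, L the Lucas sequence with L(1)=1, L(2)=3, L(n)=L(n-1)+L(n-2). Then for every divisor Δ of p, L(p/Δ)^Δ ≤ 3^{p/2}, with equality when Δ = p/2. -/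
/-- `L(n)² ≤ 3ⁿ` propagates since `(a + b)² ≤ 2(a² + b²)` and `2(3ⁿ⁺² + 3ⁿ⁺¹) = 8 · 3ⁿ⁺¹`. -/
lemma lucas_succ_sq_le_three_pow (n : ℕ) : lucas (n + 1) ^ 2 ≤ 3 ^ (n + 1) := by
  induction n using Nat.twoStepInduction with
  | zero => decide
  | one => decide
  | more n ih₀ ih₁ =>
    calc lucas (n + 3) ^ 2 = (lucas (n + 2) + lucas (n + 1)) ^ 2 := rfl
      _ ≤ 2 * (lucas (n + 2) ^ 2 + lucas (n + 1) ^ 2) := add_sq_le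
      _ ≤ 2 * (3 ^ (n + 2) + 3 ^ (n + 1)) := by gcongr
      _ ≤ 3 ^ (n + 3) := by ring_nf; omega

lemma lucas_le_sqrt_three_pow {n : ℕ} (hn : n ≠ 0) : (lucas n : ℝ) ≤ √3 ^ n := by
  obtain ⟨m, rfl⟩ := Nat.exists_eq_succ_of_ne_zero hn
  refine (pow_le_pow_iff_left₀ (by positivity) (by positivity) two_ne_zero).mp ?_
  rw [← pow_mul, mul_comm, pow_mul, Real.sq_sqrt (by norm_num)]
  exact_mod_cast lucas_succ_sq_le_three_pow m

lemma Real.sqrt_pow_of_even {x : ℝ} (hx : 0 ≤ x) {p : ℕ} (hp : Even p) :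
    √x ^ p = x ^ (p / 2) := by
  obtain ⟨k, rfl⟩ := hp
  rw [← two_mul, pow_mul, Real.sq_sqrt hx, Nat.mul_div_cancel_left k two_pos]

theorem lucas_power_upper_bound (p : ℕ) (hp : 2 ≤ p) (hpe : Even p) :
    (∀ Δ : ℕ, Δ ∣ p → ((lucas (p / Δ) : ℝ)) ^ Δ ≤ 3 ^ (p / 2)) ∧
    ((lucas (p / (p / 2)) : ℝ)) ^ (p / 2) = 3 ^ (p / 2) := by
  refine ⟨fun Δ hΔ => ?_, ?_⟩
  · have hquot : p / Δ ≠ 0 :=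
      (Nat.div_pos (Nat.le_of_dvd (by omega) hΔ) (Nat.pos_of_dvd_of_pos hΔ (by omega))).ne'
    calc (lucas (p / Δ) : ℝ) ^ Δ ≤ (√3 ^ (p / Δ)) ^ Δ := by
          gcongr
          exact lucas_le_sqrt_three_pow hquot
      _ = √3 ^ p := by rw [← pow_mul, Nat.div_mul_cancel hΔ]
      _ = 3 ^ (p / 2) := Real.sqrt_pow_of_even (by norm_num) hpe
  · have hhalf : p / (p / 2) = 2 := by
      obtain ⟨k, rfl⟩ := hpe
      rw [← two_mul, Nat.mul_div_cancel_left k two_pos, Nat.mul_div_cancel _ (by omega)]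
    rw [hhalf]
    norm_num [lucas]
end

section
/- Let N be even and Δ = N/2, so that N/Δ = K = 2 is prime. Then (1/N)·∑_{p|N} ψ(N/p)·P(p/gcd(p,Δ))^{gcd(p,Δ)} = (1/N)·∑_{q|Δ, gcd(q,2)=1} ψ(q)·2^{Δ/q}, where P is the Perrin sequence. -/
theorem total_attractors_K_eq_two (N Δ : ℕ) (hΔ : 1 ≤ Δ) (hN : N = 2 * Δ) :
    (1 / (N : ℚ)) * ∑ p ∈ N.divisors,
        (Nat.totient (N / p) : ℚ) * (perrin (p / Nat.gcd p Δ) : ℚ) ^ (Nat.gcd p Δ)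
      = (1 / (N : ℚ)) * ∑ q ∈ Δ.divisors.filter (fun q => Nat.gcd q 2 = 1),
        (Nat.totient q : ℚ) * (2 : ℚ) ^ (Δ / q) := by
  subst hN
  have hΔ0 : Δ ≠ 0 := by omega
  congr 1
  rw [← Nat.sum_div_divisors (2 * Δ) (fun p =>
      (Nat.totient ((2 * Δ) / p) : ℚ) * (perrin (p / Nat.gcd p Δ) : ℚ) ^ (Nat.gcd p Δ))]
  have hsetr : Δ.divisors.filter (fun q => Nat.gcd q 2 = 1)
      = (2 * Δ).divisors.filter (fun q => Nat.gcd q 2 = 1) := by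
    ext q
    simp only [Finset.mem_filter, Nat.mem_divisors]
    constructor
    · rintro ⟨⟨hq, _⟩, h2⟩
      exact ⟨⟨hq.mul_left 2, by positivity⟩, h2⟩
    · rintro ⟨⟨hq, _⟩, h2⟩
      exact ⟨⟨(Nat.Coprime.dvd_of_dvd_mul_left h2 hq), hΔ0⟩, h2⟩
  rw [hsetr, Finset.sum_filter]
  apply Finset.sum_congr rfl
  intro q hq
  obtain ⟨hqd, hN0⟩ := Nat.mem_divisors.mp hq
  obtain ⟨c, hc⟩ := id hqd
  have hq0 : q ≠ 0 := by rintro rfl; simp only [Nat.zero_mul] at hc; omega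
  have hc0 : c ≠ 0 := by rintro rfl; simp only [Nat.mul_zero] at hc; omega
  by_cases h2 : Nat.gcd q 2 = 1
  · -- q odd
    obtain ⟨m, hm⟩ := Nat.Coprime.dvd_of_dvd_mul_left h2 hqd
    have hm0 : m ≠ 0 := by rintro rfl; simp at hm; omega
    have h1 : 2 * Δ / q = 2 * m := by
      rw [hm, show 2 * (q * m) = q * (2 * m) by ring, Nat.mul_div_cancel_left _ (Nat.pos_of_ne_zero hq0)]
    have hgcd : Nat.gcd (2 * m) Δ = m := by
      rw [hm, Nat.mul_comm q m, Nat.mul_comm 2 m, Nat.gcd_mul_left,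
        Nat.gcd_comm 2 q, h2, mul_one]
    have h3 : 2 * m / m = 2 := Nat.mul_div_cancel 2 (Nat.pos_of_ne_zero hm0)
    have h4 : 2 * Δ / (2 * m) = q := by
      rw [hm, show 2 * (q * m) = q * (2 * m) by ring,
        Nat.mul_div_cancel _ (by positivity)]
    have hΔq : Δ / q = m := by rw [hm, Nat.mul_div_cancel_left _ (Nat.pos_of_ne_zero hq0)]
    rw [if_pos h2, h1, hgcd, h3, h4, hΔq]
    norm_num [perrin]
  · -- q even
    have h2d : 2 ∣ q := by
      have hg2 : Nat.gcd q 2 = 2 := by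
        have hle := Nat.le_of_dvd (by norm_num) (Nat.gcd_dvd_right q 2)
        have hne : Nat.gcd q 2 ≠ 0 := by simp [Nat.gcd_eq_zero_iff, hq0]
        omega
      exact hg2 ▸ Nat.gcd_dvd_left q 2
    obtain ⟨r, hr⟩ := h2d
    have hr0 : r ≠ 0 := by rintro rfl; simp at hr; exact hq0 hr
    have hΔrc : Δ = r * c := by
      have : 2 * Δ = 2 * (r * c) := by rw [hc, hr]; ring
      omega
    have hp : 2 * Δ / q = c := by
      rw [hΔrc, hr, show 2 * (r * c) = 2 * r * c by ring,
        Nat.mul_div_cancel_left _ (by positivity)]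
    have hcd : c ∣ Δ := ⟨r, by rw [hΔrc]; ring⟩
    have hgcd : Nat.gcd c Δ = c := Nat.gcd_eq_left hcd
    rw [if_neg h2, hp, hgcd, Nat.div_self (Nat.pos_of_ne_zero hc0)]
    simp [perrin, zero_pow hc0]
end

section
/- Let p ≥ 3 with p ≠ 2. Then (1/p)·∑_{d|p} μ(p/d)·(√3)^d < 2·(√3/2)^p · (1/p)·∑_{d|p} μ(p/d)·2^d. -/
/-!
Write `M x p = ∑_{d ∣ p} μ(p/d) x^d`. For `x ≥ 2` the proper divisors contribute at most
`∑_{d ≤ p/2} x^d < x^(p/2+1) ≤ x^(p-1)` in absolute value, so `M 2 p > 2^(p-1)` when `p ≥ 3`.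
For `x` above the golden ratio, `M x p < x^p`: with `q` the least prime factor of `p`, the
largest proper divisor `p/q` enters with `μ(q) = -1`, while a divisor `d` with `μ(p/d) = 1` has
`p/d` composite, hence `p/d ≥ q^2` and `d ≤ (p/q)/2`; those terms sum to less than `x^(p/q)`.
Since `√3 > φ`, this gives `M √3 p < √3^p = 2 (√3/2)^p 2^(p-1) < 2 (√3/2)^p M 2 p`.
-/

open ArithmeticFunction ArithmeticFunction.Moebius Finset

noncomputable def moebiusPowSum (x : ℝ) (p : ℕ) : ℝ :=
  ∑ d ∈ p.divisors, (μ (p / d) : ℝ) * x ^ d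

lemma moebiusPowSum_eq_pow_add (x : ℝ) {p : ℕ} (hp : p ≠ 0) :
    moebiusPowSum x p = x ^ p + ∑ d ∈ p.properDivisors, (μ (p / d) : ℝ) * x ^ d := by
  rw [moebiusPowSum, ← Nat.cons_self_properDivisors hp, sum_cons, Nat.div_self (by omega),
    moebius_apply_one, Int.cast_one, one_mul]

lemma le_div_two_of_mem_properDivisors {d p : ℕ} (hd : d ∈ p.properDivisors) : d ≤ p / 2 := by
  obtain ⟨⟨c, rfl⟩, hlt⟩ := Nat.mem_properDivisors.mp hd
  have hc : 2 ≤ c := by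
    by_contra! h
    interval_cases c <;> omega
  exact (Nat.le_div_iff_mul_le two_pos).mpr (Nat.mul_le_mul_left d hc)

lemma properDivisors_subset_Icc (p : ℕ) : p.properDivisors ⊆ Icc 1 (p / 2) := fun _ hd =>
  mem_Icc.mpr ⟨Nat.pos_of_mem_properDivisors hd, le_div_two_of_mem_properDivisors hd⟩

lemma le_div_minFac_div_two_of_moebius_eq_one {d p : ℕ} (hd : d ∈ p.properDivisors)
    (hμ : μ (p / d) = 1) : d ≤ p / p.minFac / 2 := by
  obtain ⟨hdvd, hlt⟩ := Nat.mem_properDivisors.mp hd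
  set e := p / d
  have hd₀ : 0 < d := Nat.pos_of_dvd_of_pos hdvd (by omega)
  have hde : d * e = p := Nat.mul_div_cancel' hdvd
  have he₀ : e ≠ 0 := by
    rintro h
    rw [h, mul_zero] at hde
    omega
  have he₁ : e ≠ 1 := by
    rintro h
    rw [h, mul_one] at hde
    omega
  have he_not_prime : ¬ e.Prime := fun h => by simp [moebius_apply_prime h] at hμ
  have hq : 2 ≤ p.minFac := (Nat.minFac_prime (by omega)).two_le
  have hqe : p.minFac ≤ e.minFac :=
    Nat.minFac_le_of_dvd (Nat.minFac_prime he₁).two_le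
      ((Nat.minFac_dvd e).trans (Nat.div_dvd_of_dvd hdvd))
  have hsq : p.minFac ^ 2 ≤ e :=
    (Nat.pow_le_pow_left hqe 2).trans
      (Nat.minFac_sq_le_self (Nat.pos_of_ne_zero he₀) he_not_prime)
  rw [Nat.le_div_iff_mul_le two_pos, Nat.le_div_iff_mul_le (by omega)]
  nlinarith

lemma sum_Icc_pow_lt_pow_succ {x : ℝ} (hx : 2 ≤ x) (k : ℕ) :
    ∑ d ∈ Icc 1 k, x ^ d < x ^ (k + 1) := by
  induction k with
  | zero => simpa using (by linarith : (0 : ℝ) < x)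
  | succ k ih =>
    rw [sum_Icc_succ_top (by omega), pow_succ x (k + 1)]
    nlinarith [pow_pos (by linarith : (0 : ℝ) < x) (k + 1)]

lemma sum_Icc_pow_lt_pow_two_mul {x : ℝ} (hx₀ : 0 ≤ x) (hx : x + 1 ≤ x ^ 2) (k : ℕ) :
    ∑ d ∈ Icc 1 k, x ^ d < x ^ (2 * k) := by
  induction k with
  | zero => simp
  | succ k ih =>
    have hle : x ^ (k + 1) ≤ x ^ (2 * k) * x := by
      rw [← pow_succ]
      exact pow_le_pow_right₀ (by nlinarith) (by omega)
    rw [sum_Icc_succ_top (by omega), show x ^ (2 * (k + 1)) = x ^ (2 * k) * x ^ 2 by ring]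
    nlinarith [mul_le_mul_of_nonneg_left hx (pow_nonneg hx₀ (2 * k))]

lemma pow_sub_one_lt_moebiusPowSum {x : ℝ} (hx : 2 ≤ x) {p : ℕ} (hp : 3 ≤ p) :
    x ^ (p - 1) < moebiusPowSum x p := by
  have htail : -∑ d ∈ Icc 1 (p / 2), x ^ d ≤
      ∑ d ∈ p.properDivisors, (μ (p / d) : ℝ) * x ^ d := by
    calc -∑ d ∈ Icc 1 (p / 2), x ^ d ≤ -∑ d ∈ p.properDivisors, x ^ d :=
          neg_le_neg (sum_le_sum_of_subset_of_nonneg (properDivisors_subset_Icc p)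
            fun _ _ _ => by positivity)
      _ = ∑ d ∈ p.properDivisors, -1 * x ^ d := by simp
      _ ≤ ∑ d ∈ p.properDivisors, (μ (p / d) : ℝ) * x ^ d := by
          gcongr with d
          exact_mod_cast (abs_le.mp abs_moebius_le_one).1
  have hsum := sum_Icc_pow_lt_pow_succ hx (p / 2)
  have hpow : x ^ (p / 2 + 1) ≤ x ^ (p - 1) := pow_le_pow_right₀ (by linarith) (by omega)
  have hsplit : x ^ p = x * x ^ (p - 1) := by rw [← pow_succ']; congr 1; omega
  have : 0 ≤ x ^ (p - 1) := by positivity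
  rw [moebiusPowSum_eq_pow_add x (by omega)]
  nlinarith

lemma sum_properDivisors_erase_div_minFac_le {x : ℝ} (hx : 0 ≤ x) (p : ℕ) :
    ∑ d ∈ p.properDivisors.erase (p / p.minFac), (μ (p / d) : ℝ) * x ^ d
      ≤ ∑ d ∈ Icc 1 (p / p.minFac / 2), x ^ d :=
  calc _ ≤ ∑ d ∈ (p.properDivisors.erase (p / p.minFac)).filter (fun d => μ (p / d) = 1),
        x ^ d := by
        rw [sum_filter]
        gcongr with d
        split_ifs with h
        · simp [h]
        · have : (μ (p / d) : ℝ) ≤ 0 := by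
            rcases moebius_eq_or (p / d) with h' | h' | h' <;> simp_all
          nlinarith [pow_nonneg hx d]
    _ ≤ _ := by
        refine sum_le_sum_of_subset_of_nonneg (fun d hd => ?_) fun _ _ _ => by positivity
        obtain ⟨hd, hμ⟩ := mem_filter.mp hd
        have hd := mem_of_mem_erase hd
        exact mem_Icc.mpr
          ⟨Nat.pos_of_mem_properDivisors hd, le_div_minFac_div_two_of_moebius_eq_one hd hμ⟩

lemma moebiusPowSum_lt_pow {x : ℝ} (hx₀ : 0 ≤ x) (hx : x + 1 ≤ x ^ 2) {p : ℕ}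
    (hp : 2 ≤ p) : moebiusPowSum x p < x ^ p := by
  have hq : p.minFac.Prime := Nat.minFac_prime (by omega)
  have hn : p / p.minFac ∈ p.properDivisors :=
    Nat.mem_properDivisors.mpr
      ⟨Nat.div_dvd_of_dvd p.minFac_dvd, Nat.div_lt_self (by omega) hq.one_lt⟩
  have hμn : (μ (p / (p / p.minFac)) : ℝ) = -1 := by
    rw [Nat.div_div_self p.minFac_dvd (by omega), moebius_apply_prime hq, Int.cast_neg,
      Int.cast_one]
  have hrest := sum_properDivisors_erase_div_minFac_le hx₀ p
  have hsum := sum_Icc_pow_lt_pow_two_mul hx₀ hx (p / p.minFac / 2)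
  have hpow : x ^ (2 * (p / p.minFac / 2)) ≤ x ^ (p / p.minFac) :=
    pow_le_pow_right₀ (by nlinarith) (by omega)
  rw [moebiusPowSum_eq_pow_add x (by omega), ← add_sum_erase _ _ hn, hμn]
  linarith

open ArithmeticFunction ArithmeticFunction.Moebius in
theorem attractor_count_comparison_general (p : ℕ) (hp : 3 ≤ p) :
    (1 / (p : ℝ)) * ∑ d ∈ p.divisors, (μ (p / d) : ℝ) * (Real.sqrt 3) ^ d
      < 2 * (Real.sqrt 3 / 2) ^ p *
        ((1 / (p : ℝ)) * ∑ d ∈ p.divisors, (μ (p / d) : ℝ) * 2 ^ d) := by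
  have hsqrt3 : Real.sqrt 3 + 1 ≤ Real.sqrt 3 ^ 2 := by
    have := Real.sq_sqrt (show (0 : ℝ) ≤ 3 by norm_num)
    nlinarith [Real.sqrt_nonneg 3]
  have hupper := moebiusPowSum_lt_pow (Real.sqrt_nonneg 3) hsqrt3 (by omega : 2 ≤ p)
  have hlower := pow_sub_one_lt_moebiusPowSum le_rfl hp
  have hscale : Real.sqrt 3 ^ p = 2 * (Real.sqrt 3 / 2) ^ p * 2 ^ (p - 1) := by
    obtain ⟨k, rfl⟩ : ∃ k, p = k + 1 := ⟨p - 1, by omega⟩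
    rw [div_pow, Nat.add_sub_cancel, pow_succ 2 k]
    field_simp
  change 1 / (p : ℝ) * moebiusPowSum (Real.sqrt 3) p
    < 2 * (Real.sqrt 3 / 2) ^ p * (1 / (p : ℝ) * moebiusPowSum 2 p)
  calc 1 / (p : ℝ) * moebiusPowSum (Real.sqrt 3) p < 1 / p * Real.sqrt 3 ^ p := by gcongr
    _ = 2 * (Real.sqrt 3 / 2) ^ p * (1 / p * 2 ^ (p - 1)) := by rw [hscale]; ring
    _ < 2 * (Real.sqrt 3 / 2) ^ p * (1 / p * moebiusPowSum 2 p) := by gcongr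

open ArithmeticFunction ArithmeticFunction.Moebius in
theorem attractor_count_comparison (p : ℕ) (hp : 3 ≤ p) (hp2 : p ≠ 2) :
    (1 / (p : ℝ)) * ∑ d ∈ p.divisors, (μ (p / d) : ℝ) * (Real.sqrt 3) ^ d
      < 2 * (Real.sqrt 3 / 2) ^ p *
        ((1 / (p : ℝ)) * ∑ d ∈ p.divisors, (μ (p / d) : ℝ) * 2 ^ d) :=
  attractor_count_comparison_general p hp
end
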